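/- SI_GH(S;Y,Z) := max{I(Q;S) : I(S;Q|Y) = I(S;Q|Z) = 0} is superadditive: if (S1,Y1,Z1) is independent of (S2,Y2,Z2), then SI_GH(S1S2;Y1Y2,Z1Z2) ≥ SI_GH(S1;Y1,Z1) + SI_GH(S2;Y2,Z2). -/

import Mathlib

open scoped BigOperators

/-- A probability distribution on a finite type. -/
def IsProbDist {A : Type} [Fintype A] (p : A → ℝ) : Prop :=
  (∀ x, 0 ≤ p x) ∧ ∑ x, p x = 1

/-- Shannon mutual information `I(A;B)` of a joint distribution on `A × B`. -/
noncomputable def mi2 {A B : Type} [Fintype A] [Fintype B] (p : A × B → ℝ) : ℝ :=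
  ∑ a, ∑ b, p (a, b) * Real.log (p (a, b) / ((∑ b', p (a, b')) * (∑ a', p (a', b))))

/-- Conditional mutual information `I(A;B|C)` of a joint distribution on `A × B × C`. -/
noncomputable def cmi3 {A B C : Type} [Fintype A] [Fintype B] [Fintype C]
    (p : A × B × C → ℝ) : ℝ :=
  ∑ a, ∑ b, ∑ c, p (a, b, c) *
    Real.log ((p (a, b, c) * (∑ a', ∑ b', p (a', b', c))) /
      ((∑ b', p (a, b', c)) * (∑ a', p (a', b, c))))

/-- Marginal distribution of `(S,Y)`. -/
noncomputable def margSY {S Y Z : Type} [Fintype S] [Fintype Y] [Fintype Z]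
    (p : S × Y × Z → ℝ) : S × Y → ℝ := fun x => ∑ z, p (x.1, x.2, z)

/-- Marginal distribution of `(S,Z)`. -/
noncomputable def margSZ {S Y Z : Type} [Fintype S] [Fintype Y] [Fintype Z]
    (p : S × Y × Z → ℝ) : S × Z → ℝ := fun x => ∑ y, p (x.1, y, x.2)

/-- `I(S;Y)`. -/
noncomputable def ISY {S Y Z : Type} [Fintype S] [Fintype Y] [Fintype Z]
    (p : S × Y × Z → ℝ) : ℝ := mi2 (margSY p)

/-- `I(S;Z)`. -/
noncomputable def ISZ {S Y Z : Type} [Fintype S] [Fintype Y] [Fintype Z]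
    (p : S × Y × Z → ℝ) : ℝ := mi2 (margSZ p)

/-- `I(S;YZ)`, the mutual information of `S` with the pair `(Y,Z)`. -/
noncomputable def ISYZ {S Y Z : Type} [Fintype S] [Fintype Y] [Fintype Z]
    (p : S × Y × Z → ℝ) : ℝ := mi2 p

/-- `I(S;Y|Z)`. -/
noncomputable def ISYgZ {S Y Z : Type} [Fintype S] [Fintype Y] [Fintype Z]
    (p : S × Y × Z → ℝ) : ℝ := cmi3 p

/-- The same joint distribution, with the roles of `Y` and `Z` exchanged. -/
def swapYZ {S Y Z : Type} (p : S × Y × Z → ℝ) : S × Z × Y → ℝ :=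
  fun x => p (x.1, x.2.2, x.2.1)

/-- `I(S;Z|Y)`. -/
noncomputable def ISZgY {S Y Z : Type} [Fintype S] [Fintype Y] [Fintype Z]
    (p : S × Y × Z → ℝ) : ℝ := ISYgZ (swapYZ p)

/-- The joint distribution of two independent triples, grouped componentwise. -/
def prodDist {S1 Y1 Z1 S2 Y2 Z2 : Type}
    (p1 : S1 × Y1 × Z1 → ℝ) (p2 : S2 × Y2 × Z2 → ℝ) :
    (S1 × S2) × (Y1 × Y2) × (Z1 × Z2) → ℝ :=
  fun x => p1 (x.1.1, x.2.1.1, x.2.2.1) * p2 (x.1.2, x.2.1.2, x.2.2.2)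

/-- `SI_GH(S;Y,Z) = max { I(Q;S) : I(S;Q|Y) = I(S;Q|Z) = 0 }`, the supremum
running over all finite random variables `Q` jointly distributed with `(S,Y,Z)`
(extending the given joint distribution) such that `S ⊥ Q | Y` and `S ⊥ Q | Z`. -/
noncomputable def SIGH {S Y Z : Type} [Fintype S] [Fintype Y] [Fintype Z]
    (p : S × Y × Z → ℝ) : ℝ :=
  sSup { r : ℝ | ∃ (Q : Type) (instQ : Fintype Q) (e : S × Y × Z × Q → ℝ),
      (∀ x, 0 ≤ e x) ∧
      (∀ s y z, (∑ q ∈ @Finset.univ Q instQ, e (s, y, z, q)) = p (s, y, z)) ∧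
      @cmi3 S Q Y _ instQ _ (fun x => ∑ z, e (x.1, x.2.2, z, x.2.1)) = 0 ∧
      @cmi3 S Q Z _ instQ _ (fun x => ∑ y, e (x.1, y, x.2.2, x.2.1)) = 0 ∧
      r = @mi2 S Q _ instQ (fun x => ∑ y, ∑ z, e (x.1, y, z, x.2)) }

/-! Take feasible extensions `Q₁` of `(S₁,Y₁,Z₁)` and `Q₂` of `(S₂,Y₂,Z₂)` and let `Q = (Q₁,Q₂)`
be independent across the two systems. The density of a product distribution against the product
of its marginals is the product of the two densities, so both `I(S;Q)` and `I(S;Q|·)` are additive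
over independent products: `Q` is feasible for the joint problem and
`I(S₁S₂;Q₁Q₂) = I(S₁;Q₁) + I(S₂;Q₂)`. Every feasible set contains `0` (a constant `Q`) and is
bounded by `|S|`, so the supremum of the sumset of the two feasible sets is the sum of the
suprema. -/

open Finset Real

lemma sum_sum_mul_mul_log_mul {α β : Type} [Fintype α] [Fintype β] (p : α → ℝ) (q : β → ℝ)
    (f : α → ℝ) (g : β → ℝ) (hf : ∀ a, p a ≠ 0 → f a ≠ 0) (hg : ∀ b, q b ≠ 0 → g b ≠ 0) :
    ∑ a, ∑ b, p a * q b * log (f a * g b) =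
      (∑ b, q b) * ∑ a, p a * log (f a) + (∑ a, p a) * ∑ b, q b * log (g b) := by
  have hterm : ∀ a b, p a * q b * log (f a * g b) =
      q b * (p a * log (f a)) + p a * (q b * log (g b)) := by
    intro a b
    by_cases ha : p a = 0
    · simp [ha]
    by_cases hb : q b = 0
    · simp [hb]
    rw [log_mul (hf a ha) (hg b hb)]
    ring
  simp only [hterm, sum_add_distrib, ← sum_mul, ← mul_sum]

section MutualInformation

variable {A B C D : Type} [Fintype A] [Fintype B] [Fintype C] [Fintype D]

noncomputable def mi2Ratio (p : A × B → ℝ) (x : A × B) : ℝ :=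
  p x / ((∑ b, p (x.1, b)) * ∑ a, p (a, x.2))

def prodDist₂ (p : A × B → ℝ) (q : C × D → ℝ) : (A × C) × (B × D) → ℝ :=
  fun z => p (z.1.1, z.2.1) * q (z.1.2, z.2.2)

lemma mi2_eq_sum_mul_log_mi2Ratio (p : A × B → ℝ) :
    mi2 p = ∑ x, p x * log (mi2Ratio p x) :=
  (Fintype.sum_prod_type (fun x => p x * log (mi2Ratio p x))).symm

lemma mi2Ratio_pos {p : A × B → ℝ} (hp : ∀ x, 0 ≤ p x) {x : A × B} (hpos : 0 < p x) :
    0 < mi2Ratio p x := by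
  have hrow : 0 < ∑ b, p (x.1, b) :=
    hpos.trans_le (single_le_sum (fun b _ => hp (x.1, b)) (mem_univ x.2))
  have hcol : 0 < ∑ a, p (a, x.2) :=
    hpos.trans_le (single_le_sum (fun a _ => hp (a, x.2)) (mem_univ x.1))
  unfold mi2Ratio
  positivity

lemma mi2Ratio_prodDist₂ (p : A × B → ℝ) (q : C × D → ℝ) (x : A × B) (y : C × D) :
    mi2Ratio (prodDist₂ p q) ((x.1, y.1), (x.2, y.2)) = mi2Ratio p x * mi2Ratio q y := by
  simp only [mi2Ratio, prodDist₂, Fintype.sum_prod_type, ← sum_mul_sum]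
  rw [div_mul_div_comm]
  ring_nf

lemma mi2_prodDist₂ {p : A × B → ℝ} {q : C × D → ℝ} (hp : ∀ x, 0 ≤ p x) (hq : ∀ y, 0 ≤ q y) :
    mi2 (prodDist₂ p q) = (∑ y, q y) * mi2 p + (∑ x, p x) * mi2 q := by
  rw [mi2_eq_sum_mul_log_mi2Ratio, mi2_eq_sum_mul_log_mi2Ratio, mi2_eq_sum_mul_log_mi2Ratio,
    ← sum_sum_mul_mul_log_mul p q _ _ (fun x hx => (mi2Ratio_pos hp ((hp x).lt_of_ne' hx)).ne')
      (fun y hy => (mi2Ratio_pos hq ((hq y).lt_of_ne' hy)).ne'),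
    ← (Equiv.prodProdProdComm A B C D).sum_comp, Fintype.sum_prod_type]
  simp only [Equiv.prodProdProdComm_apply, mi2Ratio_prodDist₂]
  rfl

end MutualInformation

section ConditionalMutualInformation

variable {A B C A' B' C' : Type} [Fintype A] [Fintype B] [Fintype A'] [Fintype B']

noncomputable def cmi3Ratio (p : A × B × C → ℝ) (x : A × B × C) : ℝ :=
  p x * (∑ a, ∑ b, p (a, b, x.2.2)) / ((∑ b, p (x.1, b, x.2.2)) * ∑ a, p (a, x.2.1, x.2.2))

lemma cmi3_eq_sum_mul_log_cmi3Ratio [Fintype C] (p : A × B × C → ℝ) :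
    cmi3 p = ∑ x, p x * log (cmi3Ratio p x) := by
  simp only [Fintype.sum_prod_type]
  rfl

lemma cmi3Ratio_pos {p : A × B × C → ℝ} (hp : ∀ x, 0 ≤ p x) {x : A × B × C}
    (hpos : 0 < p x) : 0 < cmi3Ratio p x := by
  have hrow : 0 < ∑ b, p (x.1, b, x.2.2) :=
    hpos.trans_le (single_le_sum (fun b _ => hp (x.1, b, x.2.2)) (mem_univ x.2.1))
  have hcol : 0 < ∑ a, p (a, x.2.1, x.2.2) :=
    hpos.trans_le (single_le_sum (fun a _ => hp (a, x.2.1, x.2.2)) (mem_univ x.1))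
  have htot : 0 < ∑ a, ∑ b, p (a, b, x.2.2) :=
    hrow.trans_le (single_le_sum (fun a _ => sum_nonneg fun b _ => hp (a, b, x.2.2))
      (mem_univ x.1))
  unfold cmi3Ratio
  positivity

lemma cmi3Ratio_prodDist (p : A × B × C → ℝ) (q : A' × B' × C' → ℝ) (x : A × B × C)
    (y : A' × B' × C') :
    cmi3Ratio (prodDist p q) ((x.1, y.1), (x.2.1, y.2.1), (x.2.2, y.2.2)) =
      cmi3Ratio p x * cmi3Ratio q y := by
  simp only [cmi3Ratio, prodDist, Fintype.sum_prod_type, ← sum_mul_sum]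
  rw [div_mul_div_comm]
  ring_nf

lemma cmi3_prodDist [Fintype C] [Fintype C'] {p : A × B × C → ℝ} {q : A' × B' × C' → ℝ}
    (hp : ∀ x, 0 ≤ p x) (hq : ∀ y, 0 ≤ q y) :
    cmi3 (prodDist p q) = (∑ y, q y) * cmi3 p + (∑ x, p x) * cmi3 q := by
  let e : (A × B × C) × (A' × B' × C') ≃ (A × A') × (B × B') × (C × C') :=
    (Equiv.prodProdProdComm A (B × C) A' (B' × C')).trans
      ((Equiv.refl _).prodCongr (Equiv.prodProdProdComm B C B' C'))
  rw [cmi3_eq_sum_mul_log_cmi3Ratio, cmi3_eq_sum_mul_log_cmi3Ratio, cmi3_eq_sum_mul_log_cmi3Ratio,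
    ← sum_sum_mul_mul_log_mul p q _ _ (fun x hx => (cmi3Ratio_pos hp ((hp x).lt_of_ne' hx)).ne')
      (fun y hy => (cmi3Ratio_pos hq ((hq y).lt_of_ne' hy)).ne'),
    ← e.sum_comp, Fintype.sum_prod_type]
  simp only [e, Equiv.trans_apply, Equiv.prodProdProdComm_apply, Equiv.prodCongr_apply,
    Equiv.coe_refl, Prod.map, id, cmi3Ratio_prodDist]
  rfl

end ConditionalMutualInformation

section Bounds

variable {A B : Type} [Fintype A] [Fintype B]

lemma mul_log_mi2Ratio_le {p : A × B → ℝ} (hp : ∀ x, 0 ≤ p x) (x : A × B) :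
    p x * log (mi2Ratio p x) ≤ p x * -log (∑ b, p (x.1, b)) := by
  rcases (hp x).eq_or_lt' with hx | hpos
  · simp [hx]
  have hrow : 0 < ∑ b, p (x.1, b) :=
    hpos.trans_le (single_le_sum (fun b _ => hp (x.1, b)) (mem_univ x.2))
  have hcol : p x ≤ ∑ a, p (a, x.2) := single_le_sum (fun a _ => hp (a, x.2)) (mem_univ x.1)
  have hcolpos : 0 < ∑ a, p (a, x.2) := hpos.trans_le hcol
  have hratio : mi2Ratio p x ≤ (∑ b, p (x.1, b))⁻¹ := by
    rw [mi2Ratio, div_le_iff₀ (by positivity), inv_mul_cancel_left₀ hrow.ne']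
    exact hcol
  rw [← log_inv]
  exact mul_le_mul_of_nonneg_left (log_le_log (mi2Ratio_pos hp hpos) hratio) hpos.le

lemma mi2_le_card {p : A × B → ℝ} (hp : ∀ x, 0 ≤ p x) : mi2 p ≤ Fintype.card A := by
  have hrow : ∀ a, ∑ b, p (a, b) * log (mi2Ratio p (a, b)) ≤ 1 := fun a =>
    calc ∑ b, p (a, b) * log (mi2Ratio p (a, b))
        ≤ ∑ b, p (a, b) * -log (∑ b', p (a, b')) := sum_le_sum fun b _ => mul_log_mi2Ratio_le hp _
      _ = negMulLog (∑ b, p (a, b)) := by rw [← sum_mul, negMulLog, neg_mul_comm]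
      _ ≤ 1 := (negMulLog_le_one_sub_self (sum_nonneg fun b _ => hp _)).trans
          (sub_le_self _ (sum_nonneg fun b _ => hp _))
  calc mi2 p ≤ ∑ _a : A, (1 : ℝ) := sum_le_sum fun a _ => hrow a
    _ = Fintype.card A := by simp

end Bounds

lemma cmi3_eq_zero_of_unique {A B C : Type} [Fintype A] [Fintype B] [Unique B] [Fintype C]
    (p : A × B × C → ℝ) : cmi3 p = 0 := by
  simp [cmi3, mul_comm]

lemma mi2_eq_zero_of_unique {A B : Type} [Fintype A] [Fintype B] [Unique B] (p : A × B → ℝ)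
    (hp : ∑ x, p x = 1) : mi2 p = 0 := by
  simp_all [mi2, Fintype.sum_prod_type]

section SIGH

variable {S Y Z : Type} [Fintype S] [Fintype Y] [Fintype Z]

def SIGHValues (p : S × Y × Z → ℝ) : Set ℝ :=
  { r : ℝ | ∃ (Q : Type) (instQ : Fintype Q) (e : S × Y × Z × Q → ℝ),
      (∀ x, 0 ≤ e x) ∧
      (∀ s y z, (∑ q ∈ @Finset.univ Q instQ, e (s, y, z, q)) = p (s, y, z)) ∧
      @cmi3 S Q Y _ instQ _ (fun x => ∑ z, e (x.1, x.2.2, z, x.2.1)) = 0 ∧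
      @cmi3 S Q Z _ instQ _ (fun x => ∑ y, e (x.1, y, x.2.2, x.2.1)) = 0 ∧
      r = @mi2 S Q _ instQ (fun x => ∑ y, ∑ z, e (x.1, y, z, x.2)) }

lemma SIGH_eq_sSup (p : S × Y × Z → ℝ) : SIGH p = sSup (SIGHValues p) := rfl

lemma bddAbove_SIGHValues (p : S × Y × Z → ℝ) : BddAbove (SIGHValues p) := by
  refine ⟨Fintype.card S, ?_⟩
  rintro r ⟨Q, _, e, he, -, -, -, rfl⟩
  exact mi2_le_card fun x => sum_nonneg fun y _ => sum_nonneg fun z _ => he _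

lemma zero_mem_SIGHValues {p : S × Y × Z → ℝ} (hp : IsProbDist p) : 0 ∈ SIGHValues p := by
  refine ⟨Unit, inferInstance, fun x => p (x.1, x.2.1, x.2.2.1), fun x => hp.1 _,
    fun s y z => by simp, cmi3_eq_zero_of_unique _, cmi3_eq_zero_of_unique _,
    (mi2_eq_zero_of_unique _ ?_).symm⟩
  simpa [Fintype.sum_prod_type] using hp.2

end SIGH

section Product

variable {S1 Y1 Z1 Q1 S2 Y2 Z2 Q2 : Type} [Fintype S1] [Fintype Y1] [Fintype Z1] [Fintype Q1]
  [Fintype S2] [Fintype Y2] [Fintype Z2] [Fintype Q2]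

lemma sum_marginal_SQ_eq_sum {p : S1 × Y1 × Z1 → ℝ} {e : S1 × Y1 × Z1 × Q1 → ℝ}
    (he : ∀ s y z, ∑ q, e (s, y, z, q) = p (s, y, z)) :
    ∑ x : S1 × Q1, ∑ y, ∑ z, e (x.1, y, z, x.2) = ∑ x, p x := by
  simp only [Fintype.sum_prod_type, ← he]
  refine sum_congr rfl fun s _ => ?_
  rw [sum_comm]
  exact sum_congr rfl fun y _ => sum_comm

def prodExtension (e1 : S1 × Y1 × Z1 × Q1 → ℝ) (e2 : S2 × Y2 × Z2 × Q2 → ℝ) :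
    (S1 × S2) × (Y1 × Y2) × (Z1 × Z2) × (Q1 × Q2) → ℝ :=
  fun x => e1 (x.1.1, x.2.1.1, x.2.2.1.1, x.2.2.2.1) * e2 (x.1.2, x.2.1.2, x.2.2.1.2, x.2.2.2.2)

lemma add_mem_SIGHValues_prodDist {p1 : S1 × Y1 × Z1 → ℝ} {p2 : S2 × Y2 × Z2 → ℝ}
    (hp1 : ∑ x, p1 x = 1) (hp2 : ∑ x, p2 x = 1) {r1 r2 : ℝ}
    (h1 : r1 ∈ SIGHValues p1) (h2 : r2 ∈ SIGHValues p2) :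
    r1 + r2 ∈ SIGHValues (prodDist p1 p2) := by
  obtain ⟨Q1, _, e1, he1, hm1, hY1, hZ1, rfl⟩ := h1
  obtain ⟨Q2, _, e2, he2, hm2, hY2, hZ2, rfl⟩ := h2
  refine ⟨Q1 × Q2, inferInstance, prodExtension e1 e2, fun x => mul_nonneg (he1 _) (he2 _),
    fun s y z => ?_, ?_, ?_, ?_⟩
  · simp only [prodExtension, Fintype.sum_prod_type, ← sum_mul_sum, hm1, hm2]
    rfl
  · have hSQY : (fun x : (S1 × S2) × (Q1 × Q2) × (Y1 × Y2) =>
        ∑ z, prodExtension e1 e2 (x.1, x.2.2, z, x.2.1)) =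
        prodDist (fun x => ∑ z, e1 (x.1, x.2.2, z, x.2.1))
          (fun x => ∑ z, e2 (x.1, x.2.2, z, x.2.1)) := by
      funext x
      simp only [prodExtension, prodDist, Fintype.sum_prod_type, sum_mul_sum]
    rw [hSQY, cmi3_prodDist (fun _ => sum_nonneg fun _ _ => he1 _)
      (fun _ => sum_nonneg fun _ _ => he2 _), hY1, hY2, mul_zero, mul_zero, add_zero]
  · have hSQZ : (fun x : (S1 × S2) × (Q1 × Q2) × (Z1 × Z2) =>
        ∑ y, prodExtension e1 e2 (x.1, y, x.2.2, x.2.1)) =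
        prodDist (fun x => ∑ y, e1 (x.1, y, x.2.2, x.2.1))
          (fun x => ∑ y, e2 (x.1, y, x.2.2, x.2.1)) := by
      funext x
      simp only [prodExtension, prodDist, Fintype.sum_prod_type, sum_mul_sum]
    rw [hSQZ, cmi3_prodDist (fun _ => sum_nonneg fun _ _ => he1 _)
      (fun _ => sum_nonneg fun _ _ => he2 _), hZ1, hZ2, mul_zero, mul_zero, add_zero]
  · have hSQ : (fun x : (S1 × S2) × (Q1 × Q2) =>
        ∑ y, ∑ z, prodExtension e1 e2 (x.1, y, z, x.2)) =
        prodDist₂ (fun x => ∑ y, ∑ z, e1 (x.1, y, z, x.2))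
          (fun x => ∑ y, ∑ z, e2 (x.1, y, z, x.2)) := by
      funext x
      simp only [prodExtension, prodDist₂, Fintype.sum_prod_type, sum_mul_sum]
    rw [hSQ, mi2_prodDist₂ (fun _ => sum_nonneg fun _ _ => sum_nonneg fun _ _ => he1 _)
      (fun _ => sum_nonneg fun _ _ => sum_nonneg fun _ _ => he2 _),
      sum_marginal_SQ_eq_sum hm1, sum_marginal_SQ_eq_sum hm2, hp1, hp2, one_mul, one_mul]

end Product

/-- `SI_GH` is superadditive under independent combination. -/
theorem SIGH_superadditive
    {S1 Y1 Z1 S2 Y2 Z2 : Type} [Fintype S1] [Fintype Y1] [Fintype Z1]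
    [Fintype S2] [Fintype Y2] [Fintype Z2]
    (p1 : S1 × Y1 × Z1 → ℝ) (p2 : S2 × Y2 × Z2 → ℝ)
    (hp1 : IsProbDist p1) (hp2 : IsProbDist p2) :
    SIGH p1 + SIGH p2 ≤ SIGH (prodDist p1 p2) := by
  have hne1 : (SIGHValues p1).Nonempty := ⟨0, zero_mem_SIGHValues hp1⟩
  have hne2 : (SIGHValues p2).Nonempty := ⟨0, zero_mem_SIGHValues hp2⟩
  rw [SIGH_eq_sSup, SIGH_eq_sSup, SIGH_eq_sSup,
    ← csSup_add hne1 (bddAbove_SIGHValues p1) hne2 (bddAbove_SIGHValues p2)]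
  exact csSup_le_csSup (bddAbove_SIGHValues _) (hne1.add hne2) <|
    Set.add_subset_iff.2 fun _ h1 _ h2 => add_mem_SIGHValues_prodDist hp1.2 hp2.2 h1 h2
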